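/- arXiv:math/0304404 — 3 statements merged into one kernel-verified Lean document; each statement's English description precedes it below -/
import Mathlib

section
/- Let F : ℝⁿ → ℝⁿ be C¹, let [X] be a compact box (product of nondegenerate closed intervals) in ℝⁿ, and let [DF([X])] be an interval matrix containing Df(x) for every x ∈ [X]. If every matrix in [DF([X])] is invertible, then F is injective on [X]: for x₁, x₂ ∈ [X] with F(x₁) = F(x₂) we have x₁ = x₂. -/
open Set

/-- Interval Newton method, assertion 0: if every matrix in the interval matrix
enclosure `𝒜` of the derivative of `F` over the box `[X]` is invertible, then
`F` is injective on `[X]`. -/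
theorem stmt_0 {n : ℕ} (F : (Fin n → ℝ) → (Fin n → ℝ))
    (hF : ContDiff ℝ 1 F)
    (a b : Fin n → ℝ) (hab : ∀ i, a i < b i)
    (𝒜 : Set (Matrix (Fin n) (Fin n) ℝ))
    (L U : Matrix (Fin n) (Fin n) ℝ)
    (h𝒜 : 𝒜 = {M | ∀ i j, M i j ∈ Icc (L i j) (U i j)})
    (hD : ∀ x ∈ Set.univ.pi fun i => Icc (a i) (b i),
      (Matrix.of fun i j => fderiv ℝ F x (Pi.single j 1) i) ∈ 𝒜)
    (hinv : ∀ M ∈ 𝒜, IsUnit M) :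
    ∀ x₁ ∈ Set.univ.pi fun i => Icc (a i) (b i),
      ∀ x₂ ∈ Set.univ.pi fun i => Icc (a i) (b i),
        F x₁ = F x₂ → x₁ = x₂ := by
  intro x₁ hx₁ x₂ hx₂ hFeq
  set v : Fin n → ℝ := x₂ - x₁ with hvdef
  have hconv : Convex ℝ (Set.univ.pi fun i => Icc (a i) (b i)) :=
    convex_pi fun i _ => convex_Icc _ _
  have hdiff : Differentiable ℝ F := hF.differentiable one_ne_zero
  have key : ∀ i : Fin n, ∃ p ∈ Set.univ.pi fun i => Icc (a i) (b i),
      (fderiv ℝ F p) v i = 0 := by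
    intro i
    have hline : ∀ t : ℝ, HasDerivAt (fun t => F (x₁ + t • v) i)
        ((fderiv ℝ F (x₁ + t • v)) v i) t := by
      intro t
      have h1 : HasDerivAt (fun t : ℝ => x₁ + t • v) v t := by
        simpa using ((hasDerivAt_id t).smul_const v).const_add x₁
      have h2 : HasDerivAt (fun t : ℝ => F (x₁ + t • v))
          ((fderiv ℝ F (x₁ + t • v)) v) t :=
        (hdiff (x₁ + t • v)).hasFDerivAt.comp_hasDerivAt t h1
      exact (hasDerivAt_pi.mp h2) i
    obtain ⟨c, hc, hceq⟩ := exists_hasDerivAt_eq_slope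
      (fun t => F (x₁ + t • v) i) (fun t => (fderiv ℝ F (x₁ + t • v)) v i)
      one_pos
      (fun t _ => (hline t).continuousAt.continuousWithinAt)
      (fun t _ => hline t)
    refine ⟨x₁ + c • v, hconv.add_smul_sub_mem hx₁ hx₂ ⟨hc.1.le, hc.2.le⟩, ?_⟩
    rw [hceq]
    have h1 : x₁ + (1 : ℝ) • v = x₂ := by
      simp [hvdef]
    have h0 : x₁ + (0 : ℝ) • v = x₁ := by simp
    simp only [h1, h0, hFeq]
    simp
  choose p hp hp0 using key
  set A : Matrix (Fin n) (Fin n) ℝ :=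
    Matrix.of fun i j => fderiv ℝ F (p i) (Pi.single j 1) i with hAdef
  have hA : A ∈ 𝒜 := by
    rw [h𝒜]
    intro i j
    have := hD (p i) (hp i)
    rw [h𝒜] at this
    exact this i j
  have hvsum : v = ∑ j, v j • (Pi.single j 1 : Fin n → ℝ) := by
    funext k
    simp [Finset.sum_apply, Pi.single_apply]
  have hmul : A.mulVec v = 0 := by
    funext i
    have expand : (fderiv ℝ F (p i)) v
        = ∑ j, v j • (fderiv ℝ F (p i)) (Pi.single j 1) := by
      conv_lhs => rw [hvsum]
      rw [map_sum]
      simp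
    have : A.mulVec v i = (fderiv ℝ F (p i)) v i := by
      rw [expand]
      simp [Matrix.mulVec, dotProduct, hAdef, Finset.sum_apply,
        mul_comm]
    rw [Pi.zero_apply, this, hp0 i]
  have : Nonempty (Invertible A) := (hinv A hA).nonempty_invertible
  obtain ⟨hInv⟩ := this
  have hinj := A.mulVec_injective_of_invertible
  have hv0 : v = 0 := by
    have := hinj (a₁ := v) (a₂ := 0) (by simpa using hmul)
    simpa using this
  have : x₂ - x₁ = 0 := hv0
  exact (sub_eq_zero.mp this).symm
end

section
/- Interval Newton enclosure: With F, [X], 𝒜, x̄ as in the interval Newton setup (F C¹ on the box [X], 𝒜 a set of invertible matrices containing DF(x) for all x ∈ [X], x̄ ∈ [X]), if x₁ ∈ [X] and F(x₁) = 0, then x₁ ∈ N(x̄,[X]) = {x̄ − A⁻¹F(x̄) : A ∈ 𝒜}. Consequently, if N(x̄,[X]) ∩ [X] = ∅ then F has no zero in [X]. -/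
open Set MeasureTheory

attribute [local instance] Matrix.normedAddCommGroup Matrix.normedSpace

/-- Interval Newton enclosure: any zero of `F` in the box `[X]` lies in the
interval Newton operator image `N(x̄,[X]) = {x̄ - A⁻¹ F(x̄) : A ∈ 𝒜}`;
consequently if this image is disjoint from `[X]` then `F` has no zero in `[X]`. -/
theorem stmt_2 {n : ℕ} (F : (Fin n → ℝ) → (Fin n → ℝ))
    (hF : ContDiff ℝ 1 F)
    (a b : Fin n → ℝ) (hab : ∀ i, a i < b i)
    (X : Set (Fin n → ℝ)) (hX : X = Set.univ.pi fun i => Icc (a i) (b i))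
    (𝒜 : Set (Matrix (Fin n) (Fin n) ℝ))
    (h𝒜conv : Convex ℝ 𝒜) (h𝒜comp : IsCompact 𝒜)
    (h𝒜inv : ∀ A ∈ 𝒜, IsUnit A)
    (hD : ∀ x ∈ X, (Matrix.of fun i j => fderiv ℝ F x (Pi.single j 1) i) ∈ 𝒜)
    (xbar : Fin n → ℝ) (hxbar : xbar ∈ X)
    (Nop : Set (Fin n → ℝ))
    (hNop : Nop = {y | ∃ A ∈ 𝒜, y = xbar - A⁻¹.mulVec (F xbar)}) :
    (∀ x₁ ∈ X, F x₁ = 0 → x₁ ∈ Nop) ∧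
      (Nop ∩ X = ∅ → ∀ x ∈ X, F x ≠ 0) := by
  have hXconv : Convex ℝ X := by
    rw [hX]; exact convex_pi fun i _ => convex_Icc _ _
  have main : ∀ x₁ ∈ X, F x₁ = 0 → x₁ ∈ Nop := by
    intro x₁ hx₁ hFx₁
    set v : Fin n → ℝ := xbar - x₁ with hv
    set c : ℝ → (Fin n → ℝ) := fun t => x₁ + t • v with hc
    have hcX : ∀ t ∈ Icc (0:ℝ) 1, c t ∈ X := by
      intro t ht
      have : c t = (1 - t) • x₁ + t • xbar := by
        simp only [hc, hv]; module
      rw [this]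
      exact hXconv hx₁ hxbar (by linarith [ht.2]) ht.1 (by ring)
    have hDF : Continuous (fderiv ℝ F) := hF.continuous_fderiv one_ne_zero
    have hcCont : Continuous c := by fun_prop
    -- the matrix-valued integrand
    set M : ℝ → Matrix (Fin n) (Fin n) ℝ :=
      fun t => Matrix.of fun i j => fderiv ℝ F (c t) (Pi.single j 1) i with hM
    have hMcont : Continuous M := by
      apply continuous_pi; intro i; apply continuous_pi; intro j
      have : Continuous fun t => fderiv ℝ F (c t) (Pi.single j 1) := by
        have h1 : Continuous fun t => fderiv ℝ F (c t) := hDF.comp hcCont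
        exact (ContinuousLinearMap.apply ℝ (Fin n → ℝ) (Pi.single j 1)).continuous.comp h1
      exact (continuous_apply i).comp this
    set μ : Measure ℝ := volume.restrict (Icc (0:ℝ) 1) with hμ
    have hprob : IsProbabilityMeasure μ := ⟨by simp [hμ]⟩
    have hMint : @Integrable (Matrix (Fin n) (Fin n) ℝ) PseudoMetricSpace.toUniformSpace.toTopologicalSpace
        SeminormedAddGroup.toContinuousENorm ℝ _ M μ := by
      have hMcont' : @Continuous ℝ (Matrix (Fin n) (Fin n) ℝ) _
          PseudoMetricSpace.toUniformSpace.toTopologicalSpace M := hMcont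
      exact hMcont'.integrableOn_Icc
    set A : Matrix (Fin n) (Fin n) ℝ := ∫ t, M t ∂μ with hA
    have hA𝒜 : A ∈ 𝒜 := by
      refine h𝒜conv.integral_mem h𝒜comp.isClosed ?_ hMint
      rw [hμ, ae_restrict_iff' measurableSet_Icc]
      exact Filter.Eventually.of_forall fun t ht => hD (c t) (hcX t ht)
    -- mulVec as a continuous linear map in the matrix
    set L : Matrix (Fin n) (Fin n) ℝ →L[ℝ] (Fin n → ℝ) :=
      LinearMap.toContinuousLinearMap
        { toFun := fun B => B.mulVec v
          map_add' := fun B C => Matrix.add_mulVec B C v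
          map_smul' := fun r B => Matrix.smul_mulVec r B v } with hL
    have hLint : ∫ t, L (M t) ∂μ = L A := L.integral_comp_comm hMint
    -- pointwise: L (M t) = fderiv F (c t) v
    have hLM : ∀ t, L (M t) = fderiv ℝ F (c t) v := by
      intro t
      have hv' : v = ∑ j, v j • (Pi.single j 1 : Fin n → ℝ) := by
        conv_lhs => rw [← Finset.univ_sum_single v]
        refine Finset.sum_congr rfl fun j _ => ?_
        rw [← Pi.single_smul, smul_eq_mul, mul_one]
      have hsum : fderiv ℝ F (c t) v = ∑ j, v j • fderiv ℝ F (c t) (Pi.single j 1) := by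
        conv_lhs => rw [hv']
        rw [map_sum]
        simp
      rw [hsum]
      funext i
      simp [hL, hM, Matrix.mulVec, dotProduct, Finset.sum_apply, mul_comm]
    -- FTC along the segment
    have hderiv : ∀ t ∈ uIcc (0:ℝ) 1,
        HasDerivAt (F ∘ c) (fderiv ℝ F (c t) v) t := by
      intro t _
      have hc' : HasDerivAt c v t := by
        have := ((hasDerivAt_id t).smul_const v).const_add x₁
        simpa only [id, one_smul] using this
      exact ((hF.differentiable one_ne_zero) (c t)).hasFDerivAt.comp_hasDerivAt t hc'
    have hintg : IntervalIntegrable (fun t => fderiv ℝ F (c t) v) volume 0 1 := by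
      apply Continuous.intervalIntegrable
      have h1 : Continuous fun t => fderiv ℝ F (c t) := hDF.comp hcCont
      exact (ContinuousLinearMap.apply ℝ (Fin n → ℝ) v).continuous.comp h1
    have hFTC : ∫ t in (0:ℝ)..1, fderiv ℝ F (c t) v = F (c 1) - F (c 0) :=
      intervalIntegral.integral_eq_sub_of_hasDerivAt hderiv hintg
    have hc0 : c 0 = x₁ := by simp [hc]
    have hc1 : c 1 = xbar := by simp [hc, hv]
    have hμint : ∫ t, fderiv ℝ F (c t) v ∂μ = ∫ t in (0:ℝ)..1, fderiv ℝ F (c t) v := by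
      rw [intervalIntegral.integral_of_le (by norm_num : (0:ℝ) ≤ 1), hμ,
        MeasureTheory.integral_Icc_eq_integral_Ioc]
    have hkey : A.mulVec v = F xbar := by
      have h1 : L A = F xbar := by
        rw [← hLint]
        simp_rw [hLM]
        rw [hμint, hFTC, hc0, hc1, hFx₁, sub_zero]
      simpa [hL] using h1
    have hdet : IsUnit A.det := (Matrix.isUnit_iff_isUnit_det A).mp (h𝒜inv A hA𝒜)
    rw [hNop]
    refine ⟨A, hA𝒜, ?_⟩
    rw [← hkey, Matrix.mulVec_mulVec, Matrix.nonsing_inv_mul A hdet, Matrix.one_mulVec]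
    simp [hv]
  refine ⟨main, fun hdisj x hx hFx => ?_⟩
  have : x ∈ Nop ∩ X := ⟨main x hx hFx, hx⟩
  rw [hdisj] at this
  exact this
end

section
/- Krawczyk existence and uniqueness: Let F : ℝⁿ → ℝⁿ be C¹, [X] a compact convex box in ℝⁿ, x̄ ∈ [X], C an invertible n×n matrix, and 𝒜 a compact convex set of matrices containing DF(y) for all y ∈ [X]. If K(x̄,[X],F) = {x̄ − C F(x̄) + (Id − C A)(x − x̄) : x ∈ [X], A ∈ 𝒜} is contained in the interior of [X], then there exists exactly one x* ∈ [X] with F(x*) = 0. -/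
open Set

open MeasureTheory in
lemma krawczyk_mvt {n : ℕ} (F : (Fin n → ℝ) → (Fin n → ℝ)) (hF : ContDiff ℝ 1 F)
    (X : Set (Fin n → ℝ)) (hXconv : Convex ℝ X)
    (𝒜 : Set (Matrix (Fin n) (Fin n) ℝ)) (h𝒜conv : Convex ℝ 𝒜) (h𝒜cl : IsClosed 𝒜)
    (hD : ∀ y ∈ X, (Matrix.of fun i j => fderiv ℝ F y (Pi.single j 1) i) ∈ 𝒜)
    {x y : Fin n → ℝ} (hx : x ∈ X) (hy : y ∈ X) :
    ∃ A ∈ 𝒜, F x - F y = A.mulVec (x - y) := by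
  set v : Fin n → ℝ := x - y with hv
  set γ : ℝ → (Fin n → ℝ) := fun t => y + t • v with hγ
  have hγmem : ∀ t ∈ Icc (0:ℝ) 1, γ t ∈ X := fun t ht => hXconv.add_smul_sub_mem hy hx ht
  have hγcont : Continuous γ := by continuity
  set Df : (Fin n → ℝ) → (Fin n → Fin n → ℝ) :=
    fun z i j => fderiv ℝ F z (Pi.single j 1) i with hDf
  have hfd : Continuous fun z => fderiv ℝ F z := hF.continuous_fderiv one_ne_zero
  have hDfcont : Continuous Df := by
    refine continuous_pi fun i => continuous_pi fun j => ?_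
    exact (continuous_apply i).comp (hfd.clm_apply continuous_const)
  set μ : Measure ℝ := volume.restrict (Set.Ioc (0:ℝ) 1) with hμ
  haveI : IsProbabilityMeasure μ := ⟨by simp [hμ, Real.volume_Ioc]⟩
  have hint : Integrable (fun t => Df (γ t)) μ :=
    (hDfcont.comp hγcont).integrableOn_Ioc
  set A' : Fin n → Fin n → ℝ := ∫ t, Df (γ t) ∂μ with hA'
  have hA'mem : A' ∈ (Matrix.of ⁻¹' 𝒜 : Set (Fin n → Fin n → ℝ)) := by
    refine Convex.integral_mem (s := (Matrix.of ⁻¹' 𝒜 : Set (Fin n → Fin n → ℝ)))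
      h𝒜conv h𝒜cl ?_ hint
    refine ae_restrict_of_forall_mem measurableSet_Ioc fun t ht => ?_
    exact hD _ (hγmem t (Ioc_subset_Icc_self ht))
  have hA'app : ∀ i j, A' i j = ∫ t, Df (γ t) i j ∂μ := by
    intro i j
    have := ((ContinuousLinearMap.proj (R := ℝ) (φ := fun _ : Fin n => ℝ) j).comp
      (ContinuousLinearMap.proj (R := ℝ) (φ := fun _ : Fin n => Fin n → ℝ) i)).integral_comp_comm
      hint
    simpa using this.symm
  refine ⟨Matrix.of A', hA'mem, ?_⟩
  funext i
  have expand : ∀ z, (fderiv ℝ F z) v i = ∑ j, Df z i j * v j := by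
    intro z
    have hvsum : v = ∑ j, v j • (Pi.single j (1:ℝ) : Fin n → ℝ) := by
      conv_lhs => rw [← Finset.univ_sum_single v]
      refine Finset.sum_congr rfl fun j _ => ?_
      funext k
      simp [Pi.single_apply]
    conv_lhs => rw [hvsum]
    rw [map_sum]
    simp [Finset.sum_apply, hDf, mul_comm]
  have hderiv : ∀ t ∈ Set.uIcc (0:ℝ) 1, HasDerivAt (fun s => F (γ s) i)
      ((fderiv ℝ F (γ t)) v i) t := by
    intro t _
    have hγd : HasDerivAt γ v t := by
      have h1 : HasDerivAt (fun s : ℝ => s • v) ((1:ℝ) • v) t := (hasDerivAt_id t).smul_const v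
      simpa [hγ] using h1.const_add y
    have hFd : HasFDerivAt F (fderiv ℝ F (γ t)) (γ t) :=
      (hF.differentiable one_ne_zero (γ t)).hasFDerivAt
    have h2 := hFd.comp_hasDerivAt t hγd
    have h3 := (ContinuousLinearMap.proj (R := ℝ) (φ := fun _ : Fin n => ℝ)
      i).hasFDerivAt.comp_hasDerivAt t h2
    exact h3
  have hcont' : Continuous fun t => (fderiv ℝ F (γ t)) v i :=
    (continuous_apply i).comp ((hfd.comp hγcont).clm_apply continuous_const)
  have key : ∫ t in (0:ℝ)..1, (fderiv ℝ F (γ t)) v i = F x i - F y i := by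
    have h := intervalIntegral.integral_eq_sub_of_hasDerivAt hderiv
      (hcont'.intervalIntegrable 0 1)
    have hγ1 : γ 1 = x := by simp [hγ, hv]
    have hγ0 : γ 0 = y := by simp [hγ]
    rw [h, hγ1, hγ0]
  have key2 : ∫ t in (0:ℝ)..1, (fderiv ℝ F (γ t)) v i = (Matrix.of A').mulVec v i := by
    rw [intervalIntegral.integral_of_le zero_le_one]
    have : ∀ t, (fderiv ℝ F (γ t)) v i = ∑ j, Df (γ t) i j * v j := fun t => expand (γ t)
    simp_rw [this]
    have hintij : ∀ j, Integrable (fun t => Df (γ t) i j * v j) μ := by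
      intro j
      have hc : Continuous fun t => Df (γ t) i j * v j := by
        exact (((continuous_apply j).comp ((continuous_apply i).comp
          (hDfcont.comp hγcont)))).mul continuous_const
      exact hc.integrableOn_Ioc
    rw [show (∫ t in Set.Ioc (0:ℝ) 1, ∑ j, Df (γ t) i j * v j) =
        ∫ t, ∑ j, Df (γ t) i j * v j ∂μ from rfl]
    rw [integral_finset_sum _ fun j _ => hintij j]
    have : (Matrix.of A').mulVec v i = ∑ j, A' i j * v j := by
      simp [Matrix.mulVec, dotProduct]
    rw [this]
    refine Finset.sum_congr rfl fun j _ => ?_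
    rw [hA'app i j, integral_mul_const]
  have := key2.symm.trans key
  simp only [Pi.sub_apply]
  rw [← this]

/-- Krawczyk existence and uniqueness: if the Krawczyk operator image
`K(x̄,[X],F)` is contained in the interior of the compact convex box `[X]`,
then `F` has exactly one zero in `[X]`. -/
theorem stmt_4 {n : ℕ} (F : (Fin n → ℝ) → (Fin n → ℝ))
    (hF : ContDiff ℝ 1 F)
    (a b : Fin n → ℝ) (hab : ∀ i, a i < b i)
    (X : Set (Fin n → ℝ)) (hX : X = Set.univ.pi fun i => Icc (a i) (b i))
    (xbar : Fin n → ℝ) (hxbar : xbar ∈ X)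
    (C : Matrix (Fin n) (Fin n) ℝ) (hC : IsUnit C)
    (𝒜 : Set (Matrix (Fin n) (Fin n) ℝ))
    (h𝒜conv : Convex ℝ 𝒜) (h𝒜comp : IsCompact 𝒜)
    (hD : ∀ y ∈ X, (Matrix.of fun i j => fderiv ℝ F y (Pi.single j 1) i) ∈ 𝒜)
    (K : Set (Fin n → ℝ))
    (hK : K = {z | ∃ x ∈ X, ∃ A ∈ 𝒜,
      z = xbar - C.mulVec (F xbar) + ((1 : Matrix (Fin n) (Fin n) ℝ) - C * A).mulVec (x - xbar)})
    (hKX : K ⊆ interior X) :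
    ∃! x, x ∈ X ∧ F x = 0 := by

  classical
  set r : Fin n → ℝ := fun i => b i - a i with hrdef
  have hr : ∀ i, 0 < r i := fun i => sub_pos.mpr (hab i)
  have hXconv : Convex ℝ X := hX ▸ convex_pi fun i _ => convex_Icc _ _
  have hmemX : ∀ x : Fin n → ℝ, x ∈ X ↔ ∀ i, a i ≤ x i ∧ x i ≤ b i := by
    intro x
    rw [hX]
    simp only [Set.mem_pi, mem_univ, forall_true_left, mem_Icc]
  have hintX : ∀ z ∈ interior X, ∀ i, a i < z i ∧ z i < b i := by
    intro z hz i
    rw [hX, interior_pi_set finite_univ] at hz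
    have := hz i (mem_univ i)
    simpa [interior_Icc] using this
  -- mean value
  have hmv : ∀ x ∈ X, ∀ y ∈ X, ∃ A ∈ 𝒜, F x - F y = A.mulVec (x - y) :=
    fun x hx y hy => krawczyk_mvt F hF X hXconv 𝒜 h𝒜conv h𝒜comp.isClosed hD hx hy
  -- the Newton-type map
  set G : (Fin n → ℝ) → (Fin n → ℝ) := fun x => x - C.mulVec (F x) with hGdef
  have hGdiff : ∀ x y : Fin n → ℝ, ∀ A : Matrix (Fin n) (Fin n) ℝ,
      F x - F y = A.mulVec (x - y) →
      G x - G y = ((1 : Matrix (Fin n) (Fin n) ℝ) - C * A).mulVec (x - y) := by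
    intro x y A h
    rw [Matrix.sub_mulVec, Matrix.one_mulVec, ← Matrix.mulVec_mulVec, ← h, hGdef]
    simp only [Matrix.mulVec_sub]
    abel
  have hGmemK : ∀ x ∈ X, G x ∈ K := by
    intro x hx
    obtain ⟨A, hA, hFd⟩ := hmv x hx xbar hxbar
    rw [hK]
    refine ⟨x, hx, A, hA, ?_⟩
    rw [← hGdiff x xbar A hFd]
    show G x = xbar - C.mulVec (F xbar) + (G x - G xbar)
    have : G xbar = xbar - C.mulVec (F xbar) := rfl
    rw [← this]; abel
  have hGX : ∀ x ∈ X, G x ∈ interior X := fun x hx => hKX (hGmemK x hx)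
  -- key geometric estimate
  have hM : ∀ A ∈ 𝒜, ∀ u : Fin n → ℝ, (∀ i, |u i| ≤ r i) → ∀ i,
      |(((1 : Matrix (Fin n) (Fin n) ℝ) - C * A).mulVec u) i| < r i := by
    intro A hA u hu i
    set p : Fin n → ℝ := fun k => a k + max (u k) 0 with hpdef
    set q : Fin n → ℝ := fun k => a k + max (-(u k)) 0 with hqdef
    have hp : p ∈ X := by
      rw [hmemX]; intro k
      have h1 := hu k
      have h2 := abs_le.mp h1
      constructor
      · simp [hpdef, le_max_iff]
      · have h3 : max (u k) 0 ≤ r k := max_le h2.2 (le_of_lt (hr k))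
        have hrk : r k = b k - a k := rfl
        show a k + max (u k) 0 ≤ b k
        linarith
    have hq : q ∈ X := by
      rw [hmemX]; intro k
      have h2 := abs_le.mp (hu k)
      constructor
      · simp [hqdef, le_max_iff]
      · have h3 : max (-(u k)) 0 ≤ r k := max_le (by linarith [h2.1]) (le_of_lt (hr k))
        have hrk : r k = b k - a k := rfl
        show a k + max (-(u k)) 0 ≤ b k
        linarith
    have hpq : p - q = u := by
      funext k
      simp only [Pi.sub_apply, hpdef, hqdef]
      rcases le_total (u k) 0 with h | h
      · rw [max_eq_right h, max_eq_left (neg_nonneg.mpr h)]; ring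
      · rw [max_eq_left h, max_eq_right (neg_nonpos.mpr h)]; ring
    set M : Matrix (Fin n) (Fin n) ℝ := (1 : Matrix (Fin n) (Fin n) ℝ) - C * A with hMdef
    have hzp : xbar - C.mulVec (F xbar) + M.mulVec (p - xbar) ∈ interior X :=
      hKX (by rw [hK]; exact ⟨p, hp, A, hA, rfl⟩)
    have hzq : xbar - C.mulVec (F xbar) + M.mulVec (q - xbar) ∈ interior X :=
      hKX (by rw [hK]; exact ⟨q, hq, A, hA, rfl⟩)
    have h1 := hintX _ hzp i
    have h2 := hintX _ hzq i
    have hdiff : (M.mulVec u) i =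
        (xbar - C.mulVec (F xbar) + M.mulVec (p - xbar)) i
        - (xbar - C.mulVec (F xbar) + M.mulVec (q - xbar)) i := by
      have : M.mulVec (p - xbar) - M.mulVec (q - xbar) = M.mulVec u := by
        rw [← Matrix.mulVec_sub, show p - xbar - (q - xbar) = p - q by abel, hpq]
      simp only [Pi.add_apply, Pi.sub_apply]
      have := congrFun this i
      simp only [Pi.sub_apply] at this
      linarith [this]
    rw [hdiff]
    rw [abs_lt]
    constructor <;> [skip; skip] <;>
      simp only [hrdef] <;> nlinarith [h1.1, h1.2, h2.1, h2.2]
  -- scaled contraction data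
  set N : Matrix (Fin n) (Fin n) ℝ → (Fin n → ℝ) → (Fin n → ℝ) :=
    fun A w i => ((((1 : Matrix (Fin n) (Fin n) ℝ) - C * A).mulVec (fun j => w j * r j)) i) / r i
    with hNdef
  have hNcont : Continuous fun pr : Matrix (Fin n) (Fin n) ℝ × (Fin n → ℝ) => N pr.1 pr.2 := by
    refine continuous_pi fun i => Continuous.div_const ?_ _
    have heq : ∀ pr : Matrix (Fin n) (Fin n) ℝ × (Fin n → ℝ),
        ((((1 : Matrix (Fin n) (Fin n) ℝ) - C * pr.1).mulVec (fun j => pr.2 j * r j)) i) =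
        ∑ j, ((if i = j then (1:ℝ) else 0) - ∑ k, C i k * pr.1 k j) * (pr.2 j * r j) := by
      intro pr
      simp [Matrix.mulVec, dotProduct, Matrix.sub_apply, Matrix.mul_apply,
        Matrix.one_apply]
    simp only [heq]
    refine continuous_finset_sum _ fun j _ => Continuous.mul ?_ ?_
    · refine Continuous.sub continuous_const (continuous_finset_sum _ fun k _ => ?_)
      exact continuous_const.mul ((continuous_apply j).comp
        ((continuous_apply k).comp continuous_fst))
    · exact ((continuous_apply j).comp continuous_snd).mul continuous_const
  set S : Set (Matrix (Fin n) (Fin n) ℝ × (Fin n → ℝ)) :=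
    𝒜 ×ˢ Metric.closedBall (0 : Fin n → ℝ) 1 with hSdef
  have hScomp : IsCompact S := h𝒜comp.prod (isCompact_closedBall 0 1)
  obtain ⟨A₀, hA₀⟩ : ∃ A₀, A₀ ∈ 𝒜 := ⟨_, hD xbar hxbar⟩
  have hSne : S.Nonempty := ⟨(A₀, 0), hA₀, Metric.mem_closedBall_self zero_le_one⟩
  obtain ⟨p₀, hp₀S, hp₀max⟩ := hScomp.exists_isMaxOn hSne (hNcont.norm.continuousOn)
  set κ₀ : ℝ := ‖N p₀.1 p₀.2‖ with hκ₀def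
  have hκ₀nonneg : 0 ≤ κ₀ := norm_nonneg _
  -- the main pointwise bound: ‖w‖ ≤ 1 and A ∈ 𝒜 implies ‖N A w‖ < 1
  have hNlt : ∀ A ∈ 𝒜, ∀ w : Fin n → ℝ, ‖w‖ ≤ 1 → ‖N A w‖ < 1 := by
    intro A hA w hw
    rw [pi_norm_lt_iff one_pos]
    intro i
    have hu : ∀ k, |w k * r k| ≤ r k := by
      intro k
      have h1 : ‖w k‖ ≤ ‖w‖ := norm_le_pi_norm w k
      have h2 : |w k| ≤ 1 := by
        calc |w k| = ‖w k‖ := rfl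
        _ ≤ ‖w‖ := h1
        _ ≤ 1 := hw
      rw [abs_mul, abs_of_pos (hr k)]
      nlinarith [abs_nonneg (w k), hr k]
    have := hM A hA (fun j => w j * r j) hu i
    show |N A w i| < 1
    rw [hNdef]
    simp only
    rw [abs_div, abs_of_pos (hr i), div_lt_one (hr i)]
    exact this
  have hκ₀lt : κ₀ < 1 := by
    obtain ⟨hA, hw⟩ := hp₀S
    exact hNlt p₀.1 hA p₀.2 (by simpa [Metric.mem_closedBall, dist_zero_right] using hw)
  -- homogeneity of N
  have hNsmul : ∀ A : Matrix (Fin n) (Fin n) ℝ, ∀ (c : ℝ) (w : Fin n → ℝ),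
      N A (c • w) = c • N A w := by
    intro A c w
    funext i
    show ((((1 : Matrix (Fin n) (Fin n) ℝ) - C * A).mulVec (fun j => (c • w) j * r j)) i) / r i
      = c * (((((1 : Matrix (Fin n) (Fin n) ℝ) - C * A).mulVec (fun j => w j * r j)) i) / r i)
    have harg : (fun j => (c • w) j * r j) = c • (fun j => w j * r j) := by
      funext j; simp [mul_assoc]
    rw [harg, Matrix.mulVec_smul]
    simp [mul_div_assoc]
  -- the uniform Lipschitz bound
  have hNle : ∀ A ∈ 𝒜, ∀ w : Fin n → ℝ, ‖N A w‖ ≤ κ₀ * ‖w‖ := by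
    intro A hA w
    rcases eq_or_ne w 0 with hw | hw
    · subst hw
      have : N A 0 = 0 := by
        funext i
        rw [hNdef]
        simp only [Pi.zero_apply, zero_mul]
        rw [show (fun _ : Fin n => (0:ℝ)) = (0 : Fin n → ℝ) from rfl, Matrix.mulVec_zero]
        simp
      simp [this]
    · have hwpos : 0 < ‖w‖ := norm_pos_iff.mpr hw
      set w' : Fin n → ℝ := ‖w‖⁻¹ • w with hw'def
      have hw'norm : ‖w'‖ = 1 := by
        rw [hw'def, norm_smul, norm_inv, norm_norm, inv_mul_cancel₀ (ne_of_gt hwpos)]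
      have hw'mem : (A, w') ∈ S := ⟨hA, by
        simpa [Metric.mem_closedBall, dist_zero_right] using le_of_eq hw'norm⟩
      have hb := hp₀max hw'mem
      have hweq : w = ‖w‖ • w' := by
        rw [hw'def, smul_smul, mul_inv_cancel₀ (ne_of_gt hwpos), one_smul]
      calc ‖N A w‖ = ‖N A (‖w‖ • w')‖ := by rw [← hweq]
        _ = ‖w‖ * ‖N A w'‖ := by rw [hNsmul, norm_smul, norm_norm]
        _ ≤ ‖w‖ * κ₀ := by
            refine mul_le_mul_of_nonneg_left ?_ (le_of_lt hwpos)
            exact hb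
        _ = κ₀ * ‖w‖ := mul_comm _ _
  -- scaling maps
  set Emap : (Fin n → ℝ) → (Fin n → ℝ) := fun x i => x i / r i with hEdef
  set Einv : (Fin n → ℝ) → (Fin n → ℝ) := fun w i => w i * r i with hEinvdef
  have hEinvE : ∀ x, Einv (Emap x) = x := by
    intro x; funext i; simp [hEdef, hEinvdef, div_mul_cancel₀ _ (ne_of_gt (hr i))]
  have hEEinv : ∀ w, Emap (Einv w) = w := by
    intro w; funext i; simp [hEdef, hEinvdef, mul_div_cancel_right₀ _ (ne_of_gt (hr i))]
  set Y : Set (Fin n → ℝ) := Set.univ.pi fun i => Icc (a i / r i) (b i / r i) with hYdef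
  have hEmem : ∀ x, x ∈ X ↔ Emap x ∈ Y := by
    intro x
    rw [hmemX, hYdef]
    simp only [Set.mem_pi, mem_univ, forall_true_left, mem_Icc, hEdef]
    constructor
    · intro h i
      exact ⟨(div_le_div_iff_of_pos_right (hr i)).mpr (h i).1,
        (div_le_div_iff_of_pos_right (hr i)).mpr (h i).2⟩
    · intro h i
      exact ⟨(div_le_div_iff_of_pos_right (hr i)).mp (h i).1,
        (div_le_div_iff_of_pos_right (hr i)).mp (h i).2⟩
  have hYcl : IsClosed Y := isClosed_set_pi fun i _ => isClosed_Icc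
  have hEinvmem : ∀ w ∈ Y, Einv w ∈ X := by
    intro w hw
    rw [hEmem, hEEinv]; exact hw
  -- the contraction on the subtype
  have hHmem : ∀ w : Y, Emap (G (Einv w.1)) ∈ Y := by
    intro w
    have hx : Einv w.1 ∈ X := hEinvmem _ w.2
    have := interior_subset (hGX _ hx)
    rw [← hEmem]; exact this
  set H : Y → Y := fun w => ⟨Emap (G (Einv w.1)), hHmem w⟩ with hHdef
  -- Lipschitz estimate for H
  have hHlip : ∀ w₁ w₂ : Y, dist (H w₁) (H w₂) ≤ κ₀ * dist w₁ w₂ := by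
    intro w₁ w₂
    have hx₁ : Einv w₁.1 ∈ X := hEinvmem _ w₁.2
    have hx₂ : Einv w₂.1 ∈ X := hEinvmem _ w₂.2
    obtain ⟨A, hA, hFd⟩ := hmv (Einv w₁.1) hx₁ (Einv w₂.1) hx₂
    have hGd := hGdiff _ _ A hFd
    have hsub : Einv w₁.1 - Einv w₂.1 = fun j => (w₁.1 - w₂.1) j * r j := by
      funext j; simp [hEinvdef, sub_mul]
    have hkey : Emap (G (Einv w₁.1)) - Emap (G (Einv w₂.1)) = N A (w₁.1 - w₂.1) := by
      funext i
      simp only [Pi.sub_apply, hEdef, hNdef]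
      rw [← sub_div]
      congr 1
      have := congrFun hGd i
      simp only [Pi.sub_apply] at this
      rw [this, hsub]
      rfl
    rw [Subtype.dist_eq, Subtype.dist_eq, dist_eq_norm, dist_eq_norm]
    show ‖Emap (G (Einv w₁.1)) - Emap (G (Einv w₂.1))‖ ≤ κ₀ * ‖w₁.1 - w₂.1‖
    rw [hkey]
    exact hNle A hA _
  -- Banach fixed point
  set κ : NNReal := ⟨κ₀, hκ₀nonneg⟩ with hκdef
  have hcontr : ContractingWith κ H := by
    constructor
    · exact_mod_cast hκ₀lt
    · exact LipschitzWith.of_dist_le_mul fun x y => hHlip x y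
  haveI : Nonempty Y := ⟨⟨Emap xbar, (hEmem xbar).1 hxbar⟩⟩
  haveI : CompleteSpace Y := hYcl.completeSpace_coe
  set y₀ : Y := ContractingWith.fixedPoint H hcontr with hy₀def
  have hfix : H y₀ = y₀ := hcontr.fixedPoint_isFixedPt
  set xstar : Fin n → ℝ := Einv y₀.1 with hxstardef
  have hxstarX : xstar ∈ X := hEinvmem _ y₀.2
  have hGfix : G xstar = xstar := by
    have h1 : Emap (G xstar) = y₀.1 := congrArg Subtype.val hfix
    have h2 := congrArg Einv h1
    rwa [hEinvE] at h2
  have hCF : C.mulVec (F xstar) = 0 := by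
    have : xstar - C.mulVec (F xstar) = xstar := hGfix
    have := sub_eq_self.mp this
    exact this
  have hCinj : ∀ v : Fin n → ℝ, C.mulVec v = 0 → v = 0 := by
    intro v hv
    have hdet : IsUnit C.det := (Matrix.isUnit_iff_isUnit_det C).mp hC
    have : (C⁻¹ * C).mulVec v = 0 := by
      rw [← Matrix.mulVec_mulVec, hv, Matrix.mulVec_zero]
    rwa [Matrix.nonsing_inv_mul C hdet, Matrix.one_mulVec] at this
  have hFxstar : F xstar = 0 := hCinj _ hCF
  refine ⟨xstar, ⟨hxstarX, hFxstar⟩, ?_⟩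
  rintro z ⟨hzX, hzF⟩
  -- z is a fixed point of G
  have hGz : G z = z := by
    rw [hGdef]; simp [hzF]
  -- uniqueness via the contraction estimate
  set wz : Y := ⟨Emap z, (hEmem z).1 hzX⟩ with hwz
  set ws : Y := ⟨Emap xstar, (hEmem xstar).1 hxstarX⟩ with hws
  have hHz : H wz = wz := by
    apply Subtype.ext
    show Emap (G (Einv (Emap z))) = Emap z
    rw [hEinvE, hGz]
  have hHs : H ws = ws := by
    apply Subtype.ext
    show Emap (G (Einv (Emap xstar))) = Emap xstar
    rw [hEinvE, hGfix]
  have hd := hHlip wz ws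
  rw [hHz, hHs] at hd
  have hdist0 : dist wz ws = 0 := by nlinarith [dist_nonneg (x := wz) (y := ws)]
  have : wz = ws := by
    rwa [dist_eq_zero] at hdist0
  have hEz : Emap z = Emap xstar := congrArg Subtype.val this
  have := congrArg Einv hEz
  rwa [hEinvE, hEinvE] at this
end
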